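/- arXiv:1612.07934 — 2 statements merged into one kernel-verified Lean document; each statement's English description precedes it below -/
import Mathlib

section
/- Decomposition of the gradient norm in the differential frame: there exists C > 0 such that for every continuously differentiable f : closure(B₁) → ℝ, ∫_{B₁} |∇f(x)|² dx ≤ C ( ∫_{B_{1/2}} |∇f(x)|² dx + Σ_{i=1}^{3} ∫_{B₁} |(x × e_i)·∇f(x)|² dx + ∫_{B₁} |x·∇f(x)|² dx ), where B_{1/2} is the open ball of radius 1/2 centered at the origin. -/
/- Decomposition of the gradient norm in the spherical differential frame:
`∫_{B₁} |∇f|² ≤ C (∫_{B_{1/2}} |∇f|² + Σᵢ ∫_{B₁} |(x × eᵢ)·∇f|² + ∫_{B₁} |x·∇f|²)`. -/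

open MeasureTheory Metric Finset

noncomputable section

/-- ℝ³ with the Euclidean norm. -/
abbrev E3 : Type := EuclideanSpace ℝ (Fin 3)

/-- The standard basis vectors of ℝ³. -/
def e3 (i : Fin 3) : E3 := EuclideanSpace.single i 1

/-- The cross product on ℝ³. -/
def cross3 (x y : E3) : E3 :=
  WithLp.toLp 2 ![x 1 * y 2 - x 2 * y 1, x 2 * y 0 - x 0 * y 2, x 0 * y 1 - x 1 * y 0]


/-! By Lagrange's identity, the squares of the tangential derivatives `(x × eᵢ)·∇f` and of the
radial derivative `x·∇f` add up to `|x|²|∇f|²`. Off `B_{1/2}` this is at least `|∇f|²/4`, so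
`|∇f|² ≤ 4 (1_{B_{1/2}} |∇f|² + Σᵢ |(x × eᵢ)·∇f|² + |x·∇f|²)` pointwise, and it remains to
integrate over `B₁`; `C¹` regularity up to the boundary bounds `∇f`, which makes every
integrand integrable. -/

lemma norm_gradient_eq_norm_fderiv {E : Type*} [NormedAddCommGroup E] [InnerProductSpace ℝ E]
    [CompleteSpace E] (f : E → ℝ) (x : E) : ‖gradient f x‖ = ‖fderiv ℝ f x‖ :=
  (InnerProductSpace.toDual ℝ E).symm.norm_map _

section
variable {E F : Type*} [NormedAddCommGroup E] [NormedSpace ℝ E] [NormedAddCommGroup F]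
  [NormedSpace ℝ F] {f : E → F} {c : E} {r : ℝ}

lemma ContDiffOn.exists_bound_fderiv_ball [ProperSpace E] (hf : ContDiffOn ℝ 1 f (closedBall c r))
    (hr : 0 < r) : ∃ M, ∀ y ∈ ball c r, ‖fderiv ℝ f y‖ ≤ M := by
  have hunique : UniqueDiffOn ℝ (closedBall c r) :=
    uniqueDiffOn_convex (convex_closedBall c r) (by simp [interior_closedBall c hr.ne', hr])
  obtain ⟨M, hM⟩ := (isCompact_closedBall c r).exists_bound_of_continuousOn
    (hf.continuousOn_fderivWithin hunique le_rfl)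
  refine ⟨M, fun y hy => ?_⟩
  rw [← fderivWithin_of_mem_nhds (closedBall_mem_nhds_of_mem hy)]
  exact hM y (ball_subset_closedBall hy)

lemma ContDiffOn.integrableOn_sq_norm_fderiv_ball [ProperSpace E] [MeasurableSpace E]
    [BorelSpace E] [CompleteSpace F] (μ : Measure E) [IsFiniteMeasureOnCompacts μ]
    (hf : ContDiffOn ℝ 1 f (closedBall c r)) (hr : 0 < r) :
    IntegrableOn (fun y => ‖fderiv ℝ f y‖ ^ 2) (ball c r) μ := by
  obtain ⟨M, hM⟩ := hf.exists_bound_fderiv_ball hr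
  refine Measure.integrableOn_of_bounded (M := M ^ 2) measure_ball_lt_top.ne
    ((measurable_fderiv ℝ f).norm.pow_const 2).aestronglyMeasurable ?_
  filter_upwards [ae_restrict_mem measurableSet_ball] with y hy
  rw [norm_pow, norm_norm]
  exact pow_le_pow_left₀ (norm_nonneg _) (hM y hy) 2

end

lemma le_inv_sq_mul_indicator_ball_add {E : Type*} [SeminormedAddCommGroup E] {F : E → ℝ}
    {x : E} (hF : 0 ≤ F x) {r : ℝ} (hr₀ : 0 < r) (hr₁ : r ≤ 1) :
    F x ≤ (r ^ 2)⁻¹ * ((ball 0 r).indicator F x + ‖x‖ ^ 2 * F x) := by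
  rcases lt_or_ge ‖x‖ r with hx | hx
  · rw [Set.indicator_of_mem (mem_ball_zero_iff.mpr hx)]
    have hr : 1 ≤ (r ^ 2)⁻¹ := one_le_inv₀ (by positivity) |>.mpr (pow_le_one₀ hr₀.le hr₁)
    calc F x ≤ (r ^ 2)⁻¹ * F x := le_mul_of_one_le_left hF hr
      _ ≤ (r ^ 2)⁻¹ * (F x + ‖x‖ ^ 2 * F x) := by
        gcongr
        exact le_add_of_nonneg_right (by positivity)
  · rw [Set.indicator_of_notMem (fun h => (mem_ball_zero_iff.mp h).not_ge hx), zero_add,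
      ← mul_assoc, inv_mul_eq_div]
    exact le_mul_of_one_le_left hF ((one_le_div (by positivity)).mpr (by gcongr))

lemma measurable_fderiv_apply_of_measurable {E F : Type*} [NormedAddCommGroup E] [NormedSpace ℝ E]
    [SecondCountableTopology E] [MeasurableSpace E] [BorelSpace E] [NormedAddCommGroup F]
    [NormedSpace ℝ F] [CompleteSpace F] [MeasurableSpace F] [BorelSpace F] (f : E → F)
    {v : E → E} (hv : Measurable v) : Measurable fun x => fderiv ℝ f x (v x) :=
  isBoundedBilinearMap_apply.continuous.measurable.comp ((measurable_fderiv ℝ f).prodMk hv)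

lemma integrableOn_ball_of_le_norm_sq_mul {E : Type*} [SeminormedAddCommGroup E] [MeasurableSpace E]
    [OpensMeasurableSpace E] {μ : Measure E} {F g : E → ℝ} (hF : IntegrableOn F (ball 0 1) μ)
    (hF₀ : ∀ x, 0 ≤ F x) (hg : Measurable g) (hg₀ : ∀ x, 0 ≤ g x)
    (hgF : ∀ x, g x ≤ ‖x‖ ^ 2 * F x) : IntegrableOn g (ball 0 1) μ := by
  refine hF.mono' hg.aestronglyMeasurable ?_
  filter_upwards [ae_restrict_mem measurableSet_ball] with x hx
  have hx : ‖x‖ ^ 2 ≤ 1 := pow_le_one₀ (norm_nonneg x) (mem_ball_zero_iff.mp hx).le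
  rw [Real.norm_of_nonneg (hg₀ x)]
  exact (hgF x).trans (mul_le_of_le_one_left (hF₀ x) hx)

lemma setIntegral_le_mul_of_le_mul_indicator_add {α : Type*} [MeasurableSpace α] {μ : Measure α}
    {s t : Set α} (hs : MeasurableSet s) (ht : MeasurableSet t) (hts : t ⊆ s) {F g : α → ℝ}
    {c : ℝ} (hF : IntegrableOn F s μ) (hg : IntegrableOn g s μ)
    (hle : ∀ x ∈ s, F x ≤ c * (t.indicator F x + g x)) :
    ∫ x in s, F x ∂μ ≤ c * (∫ x in t, F x ∂μ + ∫ x in s, g x ∂μ) := by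
  have hFt : IntegrableOn (t.indicator F) s μ := hF.indicator ht
  calc ∫ x in s, F x ∂μ ≤ ∫ x in s, c * (t.indicator F x + g x) ∂μ :=
        setIntegral_mono_on hF ((hFt.add hg).const_mul c) hs hle
    _ = c * (∫ x in t, F x ∂μ + ∫ x in s, g x ∂μ) := by
        rw [integral_const_mul, integral_add hFt hg, setIntegral_indicator ht,
          Set.inter_eq_self_of_subset_right hts]

lemma sum_sq_inner_cross3_add_sq_inner (g x : E3) :
    ∑ i, inner ℝ g (cross3 x (e3 i)) ^ 2 + inner ℝ g x ^ 2 = ‖x‖ ^ 2 * ‖g‖ ^ 2 := by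
  simp only [cross3, e3, PiLp.single_apply, PiLp.inner_apply, RCLike.inner_apply,
    Real.ringHom_apply, Fin.sum_univ_three, Matrix.cons_val_zero, Matrix.cons_val_one,
    Matrix.cons_val, Fin.reduceEq, ↓reduceIte, EuclideanSpace.real_norm_sq_eq]
  ring

lemma sum_sq_fderiv_cross3_add_sq_fderiv (f : E3 → ℝ) (x : E3) :
    ∑ i, fderiv ℝ f x (cross3 x (e3 i)) ^ 2 + fderiv ℝ f x x ^ 2
      = ‖x‖ ^ 2 * ‖gradient f x‖ ^ 2 := by
  simpa only [inner_gradient_left] using sum_sq_inner_cross3_add_sq_inner (gradient f x) x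

lemma sq_fderiv_cross3_le (f : E3 → ℝ) (x : E3) (i : Fin 3) :
    fderiv ℝ f x (cross3 x (e3 i)) ^ 2 ≤ ‖x‖ ^ 2 * ‖gradient f x‖ ^ 2 := by
  rw [← sum_sq_fderiv_cross3_add_sq_fderiv]
  exact le_add_of_le_of_nonneg
    (single_le_sum (f := fun j => fderiv ℝ f x (cross3 x (e3 j)) ^ 2)
      (fun j _ => sq_nonneg _) (mem_univ i)) (sq_nonneg _)

lemma sq_fderiv_self_le (f : E3 → ℝ) (x : E3) :
    fderiv ℝ f x x ^ 2 ≤ ‖x‖ ^ 2 * ‖gradient f x‖ ^ 2 := by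
  rw [← sum_sq_fderiv_cross3_add_sq_fderiv]
  exact le_add_of_nonneg_left (sum_nonneg fun j _ => sq_nonneg _)

lemma continuous_cross3_left (y : E3) : Continuous fun x => cross3 x y := by
  unfold cross3
  fun_prop

theorem gradient_decomposition_differential_frame :
    ∃ C > (0 : ℝ), ∀ f : E3 → ℝ,
      ContDiffOn ℝ 1 f (closedBall (0 : E3) 1) →
      (∫ x in ball (0 : E3) 1, ‖gradient f x‖ ^ 2) ≤
        C * ((∫ x in ball (0 : E3) (1 / 2), ‖gradient f x‖ ^ 2)
          + (∑ i : Fin 3, ∫ x in ball (0 : E3) 1, (fderiv ℝ f x (cross3 x (e3 i))) ^ 2)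
          + ∫ x in ball (0 : E3) 1, (fderiv ℝ f x x) ^ 2) := by
  refine ⟨((1 / 2) ^ 2)⁻¹, by norm_num, fun f hf => ?_⟩
  have hF : IntegrableOn (fun x => ‖gradient f x‖ ^ 2) (ball (0 : E3) 1) := by
    simpa only [norm_gradient_eq_norm_fderiv] using
      hf.integrableOn_sq_norm_fderiv_ball volume one_pos
  have hG (i : Fin 3) : IntegrableOn (fun x => fderiv ℝ f x (cross3 x (e3 i)) ^ 2)
      (ball (0 : E3) 1) :=
    integrableOn_ball_of_le_norm_sq_mul hF (fun _ => sq_nonneg _)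
      ((measurable_fderiv_apply_of_measurable f (continuous_cross3_left _).measurable).pow_const 2)
      (fun _ => sq_nonneg _) (sq_fderiv_cross3_le f · i)
  have hH : IntegrableOn (fun x => fderiv ℝ f x x ^ 2) (ball (0 : E3) 1) :=
    integrableOn_ball_of_le_norm_sq_mul hF (fun _ => sq_nonneg _)
      ((measurable_fderiv_apply_of_measurable f measurable_id).pow_const 2)
      (fun _ => sq_nonneg _) (sq_fderiv_self_le f)
  have hGsum := integrable_finsetSum univ fun i _ => hG i
  rw [add_assoc, ← integral_finsetSum _ fun i _ => hG i, ← integral_add hGsum hH]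
  refine setIntegral_le_mul_of_le_mul_indicator_add measurableSet_ball measurableSet_ball
    (ball_subset_ball (by norm_num)) hF (hGsum.add hH) fun x _ => ?_
  rw [sum_sq_fderiv_cross3_add_sq_fderiv]
  exact le_inv_sq_mul_indicator_ball_add (F := fun x => ‖gradient f x‖ ^ 2) (sq_nonneg _)
    (by norm_num) (by norm_num)

end
end

section
/- Normal component of the divergence of the viscous stress tensor: let μ, λ ∈ ℝ and let v : U → ℝ³ be twice continuously differentiable on an open set U ⊂ ℝ³. Then for every x ∈ U, x · (div S(v))(x) = (2μ + λ) (x·∇)(div v)(x) + μ Σ_{s=1}^{3} (x × e_s)·∇((curl v)_s)(x), where (curl v)_s = Σ_{m,n} ε_{smn} ∂_m v^n is the s-th component of the curl of v. -/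
/-! By Schwarz's theorem `∂ᵢ∂ⱼ = ∂ⱼ∂ᵢ`, so `Σᵢ ∂ᵢ S(v)ᵢⱼ = μ Δvʲ + (μ + λ) ∂ⱼ div v`. On the other
side `Σₛ (w × eₛ)·∇ fₛ = -w · curl f`, and `curl curl v = ∇ div v - Δv`, so the curl term is
`x · (Δv - ∇ div v)`. Both sides are thus `(μ + λ) (x·∇)(div v) + μ x · Δv`. -/

open MeasureTheory Metric Finset Matrix

noncomputable section

/-- The spatial partial derivative `∂ᵢ f` of a scalar function on ℝ³. -/
def pd (i : Fin 3) (f : E3 → ℝ) (x : E3) : ℝ := fderiv ℝ f x (e3 i)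

/-- The viscous stress tensor `S(v) = μ(Dv + Dvᵀ) + λ (div v) I₃`. -/
def stress (μ lam : ℝ) (v : E3 → E3) (x : E3) (i j : Fin 3) : ℝ :=
  μ * (pd i (fun y => v y j) x + pd j (fun y => v y i) x) +
    lam * (if i = j then ∑ k, pd k (fun y => v y k) x else 0)

/-- The divergence of a vector field on ℝ³. -/
def div3 (v : E3 → E3) (x : E3) : ℝ := ∑ k, pd k (fun y => v y k) x

/-- The curl of a vector field on ℝ³, whose `s`-th component is
`(curl v)ₛ = Σ_{m,n} ε_{smn} ∂_m vⁿ`. -/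
def curl3 (v : E3 → E3) (x : E3) : Fin 3 → ℝ :=
  ![pd 1 (fun y => v y 2) x - pd 2 (fun y => v y 1) x,
    pd 2 (fun y => v y 0) x - pd 0 (fun y => v y 2) x,
    pd 0 (fun y => v y 1) x - pd 1 (fun y => v y 0) x]

theorem fderiv_apply_eq_sum_pd (f : E3 → ℝ) (x w : E3) :
    fderiv ℝ f x w = ∑ i, w i * pd i f x := by
  conv_lhs => rw [← (EuclideanSpace.basisFun (Fin 3) ℝ).sum_repr w]
  simp [pd, e3, map_sum]

section Linearity

variable {f g : E3 → ℝ} {x : E3} (i : Fin 3)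

theorem pd_add (hf : DifferentiableAt ℝ f x) (hg : DifferentiableAt ℝ g x) :
    pd i (fun y => f y + g y) x = pd i f x + pd i g x := by
  simp [pd, fderiv_fun_add hf hg]

theorem pd_sub (hf : DifferentiableAt ℝ f x) (hg : DifferentiableAt ℝ g x) :
    pd i (fun y => f y - g y) x = pd i f x - pd i g x := by
  simp [pd, fderiv_fun_sub hf hg]

theorem pd_const_mul (hf : DifferentiableAt ℝ f x) (c : ℝ) :
    pd i (fun y => c * f y) x = c * pd i f x := by
  simp [pd, fderiv_const_mul hf]

theorem pd_sum {ι : Type*} (s : Finset ι) {F : ι → E3 → ℝ}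
    (hF : ∀ k ∈ s, DifferentiableAt ℝ (F k) x) :
    pd i (fun y => ∑ k ∈ s, F k y) x = ∑ k ∈ s, pd i (F k) x := by
  simp [pd, fderiv_fun_sum hF]

end Linearity

section SecondDerivatives

variable {f : E3 → ℝ} {x : E3}

theorem ContDiffAt.differentiableAt_pd (hf : ContDiffAt ℝ 2 f x) (i : Fin 3) :
    DifferentiableAt ℝ (fun y => pd i f y) x :=
  ((hf.fderiv_right (m := 1) le_rfl).differentiableAt one_ne_zero).clm_apply
    (differentiableAt_const _)

theorem ContDiffAt.pd_pd_comm (hf : ContDiffAt ℝ 2 f x) (i j : Fin 3) :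
    pd i (fun y => pd j f y) x = pd j (fun y => pd i f y) x := by
  have hD := (hf.fderiv_right (m := 1) le_rfl).differentiableAt one_ne_zero
  have hsymm := hf.isSymmSndFDerivAt (by simp [minSmoothness_of_isRCLikeNormedField])
  simp only [pd, fderiv_clm_apply hD (differentiableAt_const _)]
  simpa using hsymm (e3 i) (e3 j)

end SecondDerivatives

section VectorCalculus

variable {v : E3 → E3} {x : E3}

def lap3 (v : E3 → E3) (x : E3) (j : Fin 3) : ℝ :=
  ∑ k, pd k (fun y => pd k (fun z => v z j) y) x

theorem ContDiffAt.component (hv : ContDiffAt ℝ 2 v x) (k : Fin 3) :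
    ContDiffAt ℝ 2 (fun y => v y k) x :=
  (contDiffAt_piLp 2).1 hv k

theorem pd_div3 (hv : ContDiffAt ℝ 2 v x) (j : Fin 3) :
    pd j (fun y => div3 v y) x = ∑ k, pd j (fun y => pd k (fun z => v z k) y) x :=
  pd_sum j _ fun k _ => (hv.component k).differentiableAt_pd k

theorem sum_pd_pd_eq_pd_div3 (hv : ContDiffAt ℝ 2 v x) (j : Fin 3) :
    ∑ k, pd k (fun y => pd j (fun z => v z k) y) x = pd j (fun y => div3 v y) x := by
  rw [pd_div3 hv]
  exact sum_congr rfl fun k _ => (hv.component k).pd_pd_comm k j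

theorem pd_stress (hv : ContDiffAt ℝ 2 v x) (μ lam : ℝ) (i j : Fin 3) :
    pd i (fun y => stress μ lam v y i j) x =
      μ * (pd i (fun y => pd i (fun z => v z j) y) x + pd i (fun y => pd j (fun z => v z i) y) x)
        + lam * (if i = j then pd j (fun y => div3 v y) x else 0) := by
  have hd : ∀ a b, DifferentiableAt ℝ (fun y => pd a (fun z => v z b) y) x :=
    fun a b => (hv.component b).differentiableAt_pd a
  have hdiv : DifferentiableAt ℝ (fun y => div3 v y) x :=
    DifferentiableAt.fun_sum fun k _ => hd k k
  have hshear : DifferentiableAt ℝ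
      (fun y => μ * (pd i (fun z => v z j) y + pd j (fun z => v z i) y)) x :=
    ((hd i j).fun_add (hd j i)).const_mul μ
  change pd i (fun y => μ * (pd i (fun z => v z j) y + pd j (fun z => v z i) y)
    + lam * (if i = j then div3 v y else 0)) x = _
  by_cases h : i = j
  · subst h
    simp only [if_true]
    rw [pd_add _ hshear (hdiv.const_mul lam), pd_const_mul _ ((hd i i).fun_add (hd i i)),
      pd_add _ (hd i i) (hd i i), pd_const_mul _ hdiv]
  · simp only [h, if_false, mul_zero, add_zero]
    rw [pd_const_mul _ ((hd i j).fun_add (hd j i)), pd_add _ (hd i j) (hd j i)]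

theorem sum_pd_stress (hv : ContDiffAt ℝ 2 v x) (μ lam : ℝ) (j : Fin 3) :
    ∑ i, pd i (fun y => stress μ lam v y i j) x =
      μ * lap3 v x j + (μ + lam) * pd j (fun y => div3 v y) x := by
  simp only [pd_stress hv, sum_add_distrib, ← mul_sum, mul_add, sum_ite_eq', mem_univ, if_true,
    sum_pd_pd_eq_pd_div3 hv, lap3]
  ring

theorem sum_fderiv_curl3_cross (hv : ContDiffAt ℝ 2 v x) (w : E3) :
    ∑ s, fderiv ℝ (fun y => curl3 v y s) x (cross3 w (e3 s)) =
      ∑ j, w j * (lap3 v x j - pd j (fun y => div3 v y) x) := by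
  have hd : ∀ a b, DifferentiableAt ℝ (fun y => pd a (fun z => v z b) y) x :=
    fun a b => (hv.component b).differentiableAt_pd a
  -- writing `∂ⱼ div v` as `Σₖ ∂ₖ∂ⱼvᵏ` leaves an identity between the same second derivatives
  simp only [← sum_pd_pd_eq_pd_div3 hv, lap3, fderiv_apply_eq_sum_pd, Fin.sum_univ_three]
  simp only [curl3, cross3, e3, PiLp.single_apply, Matrix.cons_val, Fin.reduceEq, if_true, if_false,
    pd_sub _ (hd _ _) (hd _ _)]
  ring

end VectorCalculus

theorem normal_component_div_stress
    (μ lam : ℝ) (U : Set E3) (hU : IsOpen U)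
    (v : E3 → E3) (hv : ContDiffOn ℝ 2 v U) :
    ∀ x ∈ U,
      ∑ j, x j * (∑ i, pd i (fun y => stress μ lam v y i j) x)
        = (2 * μ + lam) * fderiv ℝ (fun y => div3 v y) x x
          + μ * ∑ s, fderiv ℝ (fun y => curl3 v y s) x (cross3 x (e3 s)) := by
  intro x hx
  have hvx : ContDiffAt ℝ 2 v x := hv.contDiffAt (hU.mem_nhds hx)
  rw [sum_fderiv_curl3_cross hvx, fderiv_apply_eq_sum_pd]
  simp only [sum_pd_stress hvx, Fin.sum_univ_three]
  ring

end
end
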